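/- arXiv:1607.00965 — 8 statements merged into one kernel-verified Lean document; each statement's English description precedes it below -/
import Mathlib

section
/- Let A be a commutative ring with identity of finite characteristic n, and let B = (ℤ/nℤ)[A*] be the subring generated by the prime subring and the units. Then the nilradical of B equals the nilradical of A; in particular, A is reduced if and only if B is reduced. -/
/-- For `A` of finite characteristic `n` and `B = (ℤ/nℤ)[A*]` the subring
generated by the prime subring and the units, the nilradical of `B` equals the nilradical
of `A` (every nilpotent of `A` lies in `B`, and nilpotency is checked in `A`); in
particular `A` is reduced iff `B` is reduced. -/
theorem stmt2 {A : Type*} [CommRing A] (n : ℕ) (hn : 0 < n) [CharP A n] :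
    (∀ x : A, IsNilpotent x → x ∈ Subring.closure {x : A | IsUnit x}) ∧
    (IsReduced A ↔ IsReduced (Subring.closure {x : A | IsUnit x})) := by
  have hmem : ∀ x : A, IsNilpotent x → x ∈ Subring.closure {x : A | IsUnit x} := by
    intro x hx
    have h1 : IsUnit (1 + x) := hx.isUnit_one_add
    have : x = (1 + x) - 1 := by ring
    rw [this]
    exact sub_mem (Subring.subset_closure h1) (Subring.one_mem _)
  refine ⟨hmem, ⟨fun h => isReduced_of_injective (Subring.closure {x : A | IsUnit x}).subtype Subtype.val_injective, fun h => ?_⟩⟩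
  constructor
  intro x hx
  have hxB := hmem x hx
  have : IsNilpotent (⟨x, hxB⟩ : Subring.closure {x : A | IsUnit x}) := by
    obtain ⟨k, hk⟩ := hx
    exact ⟨k, Subtype.ext (by simpa using hk)⟩
  have := h.eq_zero _ this
  simpa using congrArg Subtype.val this
end

section
/- The group ℤ/p³ℤ × (ℤ/pℤ)^{2λ-3}, for λ ≥ 2 and p prime, is not isomorphic to 1 + m for any finite local commutative ring (A, m) with residue field F_{p^λ}. -/
/-!
Since `1 + m` is in bijection with `m`, the group has order `|m| = p^{2λ} = |k|²`. Each nonzero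
layer `m^i / m^{i+1}` of the `m`-adic filtration is a nonzero `k`-vector space, so has at least
`|k|` elements; hence `m³ ≠ 0` would force `|m| ≥ |k|² |m³| ≥ 2 |k|²`, and so `m³ = 0`.
As `p ∈ m`, raising `1 + x` with `x ∈ m^i` to the `p`-th power lands in `1 + m^{i+1}`, so `1 + m`
has exponent dividing `p²`, whereas `ℤ/p³ℤ × (ℤ/pℤ)^{2λ-3}` contains an element of order `p³`.
-/

open IsLocalRing

section CommRing

variable {A : Type*} [CommRing A] {I : Ideal A} {p : ℕ}

theorem Ideal.one_add_pow_prime_sub_one_mem (hp : p.Prime) (hpI : (p : A) ∈ I) {i : ℕ}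
    (hi : 1 ≤ i) {x : A} (hx : x ∈ I ^ i) : (1 + x) ^ p - 1 ∈ I ^ (i + 1) := by
  obtain ⟨r, hr⟩ := exists_add_pow_prime_eq hp (1 : A) x
  have hxp : x ^ p ∈ I ^ (i + 1) :=
    Ideal.pow_le_pow_right (by nlinarith [hp.two_le]) (pow_mul I i p ▸ Ideal.pow_mem_pow hx p)
  have hpx : (p : A) * x ∈ I ^ (i + 1) := pow_succ' I i ▸ Ideal.mul_mem_mul hpI hx
  rw [hr, one_pow, mul_one, add_assoc, add_sub_cancel_left]
  exact add_mem hxp (Ideal.mul_mem_right r _ hpx)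

theorem Ideal.one_add_pow_prime_pow_sub_one_mem (hp : p.Prime) (hpI : (p : A) ∈ I) {x : A}
    (hx : x ∈ I) (k : ℕ) : (1 + x) ^ p ^ k - 1 ∈ I ^ (k + 1) := by
  induction k with
  | zero => simpa using hx
  | succ k ih =>
    have := Ideal.one_add_pow_prime_sub_one_mem hp hpI (Nat.le_add_left 1 k) ih
    rwa [add_sub_cancel, ← pow_mul, ← pow_succ] at this

theorem Ideal.pow_prime_pow_eq_one_of_sub_one_mem (hp : p.Prime) (hpI : (p : A) ∈ I) {k : ℕ}
    (hI : I ^ (k + 1) = ⊥) {u : A} (hu : u - 1 ∈ I) : u ^ p ^ k = 1 := by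
  have := Ideal.one_add_pow_prime_pow_sub_one_mem hp hpI hu k
  rwa [hI, Ideal.mem_bot, add_sub_cancel, sub_eq_zero] at this

end CommRing

namespace IsLocalRing

variable {A : Type*} [CommRing A] [IsLocalRing A]

theorem natCast_mem_maximalIdeal_of_card_residueField_eq_pow [Finite (ResidueField A)]
    {p n : ℕ} (hn : n ≠ 0) (h : Nat.card (ResidueField A) = p ^ n) :
    (p : A) ∈ maximalIdeal A := by
  have := Fintype.ofFinite (ResidueField A)
  have hpn : (p : ResidueField A) ^ n = 0 := by
    rw [← Nat.cast_pow, ← h, Nat.card_eq_fintype_card, Nat.cast_card_eq_zero]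
  rw [← residue_eq_zero_iff, map_natCast]
  exact pow_eq_zero_iff hn |>.mp hpn

theorem card_eq_card_maximalIdeal_of_mem_iff {H : Subgroup Aˣ}
    (hH : ∀ u : Aˣ, u ∈ H ↔ (u : A) - 1 ∈ maximalIdeal A) :
    Nat.card H = Nat.card (maximalIdeal A) := by
  refine Nat.card_eq_of_bijective (fun u => ⟨((u : Aˣ) : A) - 1, (hH u).mp u.2⟩) ⟨?_, ?_⟩
  · intro u v huv
    exact Subtype.ext (Units.ext (sub_left_inj.mp (congrArg Subtype.val huv)))
  · rintro ⟨x, hx⟩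
    have hunit : IsUnit (1 + x) := by
      simpa using isUnit_one_sub_self_of_mem_nonunits (-x) (neg_mem hx)
    exact ⟨⟨hunit.unit, (hH _).mpr (by simpa using hx)⟩, by simp⟩

theorem card_residueField_le_of_forall_smul_eq_zero {M : Type*} [AddCommGroup M] [Module A M]
    [Finite M] {x : M} (hx : x ≠ 0) (h : ∀ a ∈ maximalIdeal A, a • x = 0) :
    Nat.card (ResidueField A) ≤ Nat.card M := by
  set f := LinearMap.toSpanSingleton A M x
  have hker : maximalIdeal A = LinearMap.ker f :=
    (maximalIdeal.isMaximal A).eq_of_le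
      (fun htop => hx (by simpa [f] using LinearMap.congr_fun (LinearMap.ker_eq_top.mp htop) 1))
      (fun a ha => h a ha)
  exact Nat.card_le_card_of_injective _
    (LinearMap.ker_eq_bot.mp (Submodule.ker_liftQ_eq_bot' _ f hker))

theorem maximalIdeal_pow_succ_ne [IsNoetherianRing A] {i : ℕ} (h : maximalIdeal A ^ i ≠ ⊥) :
    maximalIdeal A ^ (i + 1) ≠ maximalIdeal A ^ i := by
  intro hi
  refine h (Submodule.eq_bot_of_le_smul_of_le_jacobson_bot (maximalIdeal A) _
    (IsNoetherian.noetherian _) ?_ (maximalIdeal_le_jacobson _))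
  rw [smul_eq_mul, ← pow_succ', hi]

variable [Finite A]

theorem card_residueField_mul_card_maximalIdeal_pow_succ_le {i : ℕ}
    (h : maximalIdeal A ^ i ≠ ⊥) :
    Nat.card (ResidueField A) * Nat.card (maximalIdeal A ^ (i + 1) : Ideal A) ≤
      Nat.card (maximalIdeal A ^ i : Ideal A) := by
  set m := maximalIdeal A
  have hle : m ^ (i + 1) ≤ m ^ i := Ideal.pow_le_pow_right i.le_succ
  obtain ⟨v, hv, hv'⟩ := SetLike.exists_of_lt (lt_of_le_of_ne hle (maximalIdeal_pow_succ_ne h))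
  set N : Submodule A (m ^ i : Ideal A) := Submodule.comap (Submodule.subtype (m ^ i)) (m ^ (i + 1))
  have : Finite ((m ^ i : Ideal A) ⧸ N) := Quotient.finite _
  have hvN : N.mkQ ⟨v, hv⟩ ≠ 0 := by simpa [N] using hv'
  have hk := card_residueField_le_of_forall_smul_eq_zero hvN fun a ha => by
    rw [← map_smul, Submodule.mkQ_apply, Submodule.Quotient.mk_eq_zero]
    simpa [N, pow_succ, mul_comm a] using Ideal.mul_mem_mul hv ha
  rw [Submodule.card_eq_card_quotient_mul_card N,
    Nat.card_congr (Submodule.comapSubtypeEquivOfLe hle).toEquiv, mul_comm]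
  exact Nat.mul_le_mul_left _ hk

theorem card_residueField_pow_mul_card_maximalIdeal_pow_succ_le {n : ℕ}
    (h : maximalIdeal A ^ (n + 1) ≠ ⊥) :
    Nat.card (ResidueField A) ^ n * Nat.card (maximalIdeal A ^ (n + 1) : Ideal A) ≤
      Nat.card (maximalIdeal A) := by
  induction n with
  | zero => simp
  | succ n ih =>
    have h' : maximalIdeal A ^ (n + 1) ≠ ⊥ := fun h0 => h (by rw [pow_succ, h0, Ideal.bot_mul])
    calc Nat.card (ResidueField A) ^ (n + 1) * Nat.card (maximalIdeal A ^ (n + 2) : Ideal A)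
        = Nat.card (ResidueField A) ^ n *
            (Nat.card (ResidueField A) * Nat.card (maximalIdeal A ^ (n + 2) : Ideal A)) := by
          ring
      _ ≤ Nat.card (ResidueField A) ^ n * Nat.card (maximalIdeal A ^ (n + 1) : Ideal A) :=
          Nat.mul_le_mul_left _ (card_residueField_mul_card_maximalIdeal_pow_succ_le h')
      _ ≤ Nat.card (maximalIdeal A) := ih h'

theorem maximalIdeal_pow_succ_eq_bot_of_card_lt {n : ℕ}
    (h : Nat.card (maximalIdeal A) < 2 * Nat.card (ResidueField A) ^ n) :
    maximalIdeal A ^ (n + 1) = ⊥ := by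
  by_contra hne
  have : Nontrivial (maximalIdeal A ^ (n + 1) : Ideal A) := Submodule.nontrivial_iff_ne_bot.mpr hne
  have h2 : 2 ≤ Nat.card (maximalIdeal A ^ (n + 1) : Ideal A) := Finite.one_lt_card
  have := card_residueField_pow_mul_card_maximalIdeal_pow_succ_le hne
  nlinarith

end IsLocalRing

theorem orderOf_ofAdd_one_zero (n : ℕ) (M : Type*) [AddMonoid M] :
    orderOf (Multiplicative.ofAdd ((1 : ZMod n), (0 : M))) = n := by
  rw [orderOf_ofAdd_eq_addOrderOf, Prod.addOrderOf, addOrderOf_zero, ZMod.addOrderOf_one,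
    Nat.lcm_one_right]

/-- For `p` prime and `λ ≥ 2`, the group `ℤ/p³ℤ × (ℤ/pℤ)^{2λ-3}` is not
isomorphic to `1 + m` for any finite local commutative ring `(A, m)` with residue field
`F_{p^λ}`. -/
theorem stmt10 (p lam : ℕ) (hp : p.Prime) (hlam : 2 ≤ lam)
    (A : Type*) [CommRing A] [IsLocalRing A] [Finite A]
    (hres : Nat.card (IsLocalRing.ResidueField A) = p ^ lam)
    (H : Subgroup Aˣ)
    (hH : ∀ u : Aˣ, u ∈ H ↔ (u : A) - 1 ∈ IsLocalRing.maximalIdeal A) :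
    ¬ Nonempty (H ≃* Multiplicative (ZMod (p ^ 3) × (Fin (2 * lam - 3) → ZMod p))) := by
  rintro ⟨e⟩
  have hcard : Nat.card (maximalIdeal A) = Nat.card (ResidueField A) ^ 2 := by
    rw [← card_eq_card_maximalIdeal_of_mem_iff hH, Nat.card_congr e.toEquiv, hres]
    rw [Nat.card_congr Multiplicative.toAdd, Nat.card_prod, Nat.card_fun, Nat.card_zmod,
      Nat.card_zmod, Nat.card_fin, ← pow_add, ← pow_mul]
    congr 1
    omega
  have : Finite (ResidueField A) := Quotient.finite _
  have hm3 : maximalIdeal A ^ (2 + 1) = ⊥ :=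
    maximalIdeal_pow_succ_eq_bot_of_card_lt
      (by rw [hcard]; exact lt_two_mul_self (pow_pos Nat.card_pos 2))
  have hpm := natCast_mem_maximalIdeal_of_card_residueField_eq_pow (by omega) hres
  have hexp (u : H) : u ^ p ^ 2 = 1 :=
    Subtype.ext <| Units.ext <| by
      simpa using Ideal.pow_prime_pow_eq_one_of_sub_one_mem hp hpm hm3 ((hH u).mp u.2)
  have hord := orderOf_ofAdd_one_zero (p ^ 3) (Fin (2 * lam - 3) → ZMod p)
  rw [← e.symm.orderOf_eq] at hord
  have hdvd := hord ▸ orderOf_dvd_of_pow_eq_one (hexp _)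
  exact absurd (Nat.le_of_dvd (pow_pos hp.pos 2) hdvd)
    (not_le.mpr (Nat.pow_lt_pow_right hp.one_lt (by norm_num)))
end

section
/- Let A be a finite local commutative ring of characteristic a power of an odd prime p whose group of units A* is cyclic. Then |A*| equals either p^λ − 1 for some λ ≥ 1, or (p−1)p^k for some k ≥ 1. -/
open IsLocalRing

lemma aux_pow {R : Type*} [CommRing R] (x : R) (hx : x * x = 0) (n : ℕ) :
    (1 + x) ^ n = 1 + n * x := by
  induction n with
  | zero => simp
  | succ n ih =>
    rw [pow_succ, ih]
    push_cast
    linear_combination (n : R) * hx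

/-- A finite local commutative ring of characteristic a power of an odd
prime `p` with cyclic unit group has `|A*| = p^λ - 1` for some `λ ≥ 1`, or
`|A*| = (p-1)p^k` for some `k ≥ 1`. -/
theorem stmt11 {A : Type*} [CommRing A] [IsLocalRing A] [Finite A]
    (p s : ℕ) (hp : p.Prime) (hodd : p ≠ 2) (hs : 0 < s) (hchar : CharP A (p ^ s))
    (hcyc : IsCyclic Aˣ) :
    (∃ lam ≥ 1, Nat.card Aˣ = p ^ lam - 1) ∨
    (∃ k ≥ 1, Nat.card Aˣ = (p - 1) * p ^ k) := by
  classical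
  haveI := Fact.mk hp
  haveI : Fintype A := Fintype.ofFinite A
  have hps1 : p ^ s ≠ 1 := (Nat.one_lt_pow hs.ne' hp.one_lt).ne'
  haveI : Nontrivial A := CharP.nontrivial_of_char_ne_one hps1
  set m : Ideal A := maximalIdeal A with hm
  -- char of residue field
  have hcast : ((p : ResidueField A)) ^ s = 0 := by
    have : ((p ^ s : ℕ) : A) = 0 := CharP.cast_eq_zero A (p ^ s)
    have h2 : ((p ^ s : ℕ) : ResidueField A) = 0 := by
      rw [← map_natCast (residue A), this, map_zero]
    push_cast at h2
    exact h2
  have hcharK : CharP (ResidueField A) p := by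
    have hp0 : ((p : ℕ) : ResidueField A) = 0 := pow_eq_zero_iff hs.ne' |>.mp hcast
    have hdvd : ringChar (ResidueField A) ∣ p := ringChar.dvd hp0
    rcases (Nat.Prime.eq_one_or_self_of_dvd hp _ hdvd) with h | h
    · exfalso
      have hc := ringChar.charP (ResidueField A)
      rw [h] at hc
      have h1 : ((1 : ℕ) : ResidueField A) = 0 :=
        (CharP.cast_eq_zero_iff (ResidueField A) 1 1).mpr dvd_rfl
      rw [Nat.cast_one] at h1
      exact one_ne_zero h1
    · exact h ▸ ringChar.charP _
  haveI := hcharK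
  haveI : Finite (ResidueField A) :=
    Finite.of_surjective (residue A) Ideal.Quotient.mk_surjective
  haveI : Fintype (ResidueField A) := Fintype.ofFinite _
  obtain ⟨lam, -, hk⟩ := FiniteField.card (ResidueField A) p
  have hA : Nat.card A = Nat.card m * Nat.card (ResidueField A) :=
    Submodule.card_eq_card_quotient_mul_card (m : Submodule A A)
  have hpA : IsPGroup p (Multiplicative A) := by
    intro a
    refine ⟨s, ?_⟩
    have h0 : (p ^ s : ℕ) • a.toAdd = 0 := by
      rw [nsmul_eq_mul, CharP.cast_eq_zero A, zero_mul]
    rw [← ofAdd_toAdd a, ← ofAdd_nsmul, h0]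
    rfl
  obtain ⟨e, he⟩ := IsPGroup.iff_card.mp hpA
  have heA : Nat.card A = p ^ e := he
  have hmdvd : Nat.card m ∣ p ^ e := by
    exact Dvd.intro _ (by rw [← heA, hA, mul_comm])
  obtain ⟨t, -, ht⟩ := (Nat.dvd_prime_pow hp).mp hmdvd
  -- counting units
  have e1 : Nat.card Aˣ = Nat.card {a : A // IsUnit a} :=
    Nat.card_congr ⟨fun u => ⟨u, u.isUnit⟩, fun a => a.2.unit,
      fun u => Units.ext u.isUnit.unit_spec, fun a => Subtype.ext a.2.unit_spec⟩
  have e2 : Nat.card m = Nat.card {a : A // ¬ IsUnit a} :=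
    Nat.card_congr (Equiv.subtypeEquivRight fun a => by
      simp [hm, mem_maximalIdeal, mem_nonunits_iff])
  have e3 : Fintype.card {a : A // ¬ IsUnit a}
      = Fintype.card A - Fintype.card {a : A // IsUnit a} :=
    Fintype.card_subtype_compl _
  have e4 : Fintype.card {a : A // IsUnit a} ≤ Fintype.card A :=
    Fintype.card_subtype_le _
  have hU : Nat.card Aˣ = Nat.card A - Nat.card m := by
    rw [e1, e2, Nat.card_eq_fintype_card, Nat.card_eq_fintype_card, Nat.card_eq_fintype_card]
    omega
  have hkk : Nat.card (ResidueField A) = p ^ (lam : ℕ) := by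
    rw [Nat.card_eq_fintype_card, hk]
  have hcardU : Nat.card Aˣ = p ^ (t : ℕ) * (p ^ (lam : ℕ) - 1) := by
    rw [hU, hA, ht, hkk, Nat.mul_sub, mul_one]
  rcases Nat.eq_zero_or_pos t with ht0 | ht1
  · -- field case
    exact Or.inl ⟨lam, lam.one_le, by rw [hcardU, ht0, pow_zero, one_mul]⟩
  right
  refine ⟨t, ht1, ?_⟩
  suffices hlam1 : (lam : ℕ) = 1 by
    rw [hcardU, hlam1, pow_one, mul_comm]
  -- m is nonzero
  have hmne : m ≠ ⊥ := by
    intro h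
    have : Nat.card m = 1 := by rw [h]; simp
    rw [ht] at this
    have h2 : p ^ t ≤ p ^ 0 := by rw [this]; simp
    have := (Nat.pow_le_pow_iff_right hp.one_lt).mp h2
    omega
  -- nilpotency of the maximal ideal
  haveI : IsArtinianRing A := isArtinian_of_finite
  have hnil : ∃ n : ℕ, m ^ n = ⊥ := by
    obtain ⟨n, hn⟩ := IsArtinianRing.isNilpotent_jacobson_bot (R := A)
    rw [jacobson_eq_maximalIdeal ⊥ bot_ne_top] at hn
    exact ⟨n, hn⟩
  have hn0spec : m ^ Nat.find hnil = ⊥ := Nat.find_spec hnil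
  set n0 := Nat.find hnil with hn0def
  have hge2 : 2 ≤ n0 := by
    by_contra hlt
    push_neg at hlt
    interval_cases n0
    · rw [pow_zero, Ideal.one_eq_top] at hn0spec
      have h1 : (1 : A) ∈ (⊥ : Ideal A) := hn0spec ▸ Submodule.mem_top
      exact one_ne_zero ((Submodule.mem_bot A).mp h1)
    · rw [pow_one] at hn0spec; exact hmne hn0spec
  set N := n0 - 1 with hNdef
  have hN1 : 1 ≤ N := by omega
  have hNne : m ^ N ≠ ⊥ := Nat.find_min hnil (by omega)
  have hNsucc : m ^ (N + 1) = ⊥ := by rw [show N + 1 = n0 by omega]; exact hn0spec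
  obtain ⟨z, hzmem, hz0⟩ := Submodule.exists_mem_ne_zero_of_ne_bot hNne
  have hzm : z ∈ m := Ideal.pow_le_self (by omega) hzmem
  have hmz : ∀ a ∈ m, a * z = 0 := by
    intro a ha
    have h1 : z * a ∈ m ^ N * m := Ideal.mul_mem_mul hzmem ha
    rw [← pow_succ, hNsucc] at h1
    rw [mul_comm]
    exact (Submodule.mem_bot A).mp h1
  have hz2 : z * z = 0 := hmz z hzm
  have hpu : ¬ IsUnit (p : A) := by
    intro h
    have h2 : ((p : A)) ^ s = 0 := by
      have h3 : ((p ^ s : ℕ) : A) = 0 := CharP.cast_eq_zero A _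
      push_cast at h3
      exact h3
    have := h.pow s
    rw [h2] at this
    exact not_isUnit_zero this
  have hpz : (p : A) * z = 0 := hmz _ ((mem_maximalIdeal _).mpr hpu)
  have hIm : ∀ a : A, a * z = 0 ↔ a ∈ m := by
    intro a
    constructor
    · intro h
      by_contra ham
      have ha : IsUnit a := by
        by_contra h'
        exact ham ((mem_maximalIdeal a).mpr h')
      obtain ⟨v, rfl⟩ := ha
      refine hz0 ?_
      calc z = ↑v⁻¹ * (↑v * z) := by rw [← mul_assoc, Units.inv_mul, one_mul]
        _ = ↑v⁻¹ * 0 := by rw [h]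
        _ = 0 := mul_zero _
    · intro h
      exact hmz a h
  -- the unit 1 + a z
  let u : A → Aˣ := fun a =>
    ⟨1 + a * z, 1 - a * z, by linear_combination (-(a*a)) * hz2,
      by linear_combination (-(a*a)) * hz2⟩
  have hupow : ∀ a : A, (u a) ^ p = 1 := by
    intro a
    have haz : (a * z) * (a * z) = 0 := by linear_combination (a*a) * hz2
    ext
    rw [Units.val_pow_eq_pow_val]
    show (1 + a * z) ^ p = 1
    rw [aux_pow _ haz p]
    have : (p : A) * (a * z) = 0 := by linear_combination a * hpz
    rw [this, add_zero]
  let φ : Multiplicative A →* Aˣ :=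
    { toFun := fun a => u a.toAdd
      map_one' := by
        ext
        show 1 + Multiplicative.toAdd (1 : Multiplicative A) * z = 1
        rw [toAdd_one, zero_mul, add_zero]
      map_mul' := by
        intro a b
        ext
        show 1 + Multiplicative.toAdd (a * b) * z
          = (1 + a.toAdd * z) * (1 + b.toAdd * z)
        rw [toAdd_mul]
        linear_combination (-(a.toAdd * b.toAdd)) * hz2 }
  have hker : ∀ a : Multiplicative A, a ∈ MonoidHom.ker φ ↔ a.toAdd ∈ m := by
    intro a
    rw [MonoidHom.mem_ker]
    constructor
    · intro h
      have := congrArg Units.val h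
      have h2 : 1 + a.toAdd * z = 1 := this
      exact (hIm _).mp (by linear_combination h2)
    · intro h
      ext
      show 1 + a.toAdd * z = 1
      rw [(hIm _).mpr h, add_zero]
  have hkercard : Nat.card (MonoidHom.ker φ) = Nat.card m :=
    Nat.card_congr (Equiv.subtypeEquiv Multiplicative.toAdd hker)
  have hq1 : Nat.card (Multiplicative A)
      = Nat.card (Multiplicative A ⧸ MonoidHom.ker φ) * Nat.card (MonoidHom.ker φ) :=
    Subgroup.card_eq_card_quotient_mul_card_subgroup _
  have hq2 : Nat.card (Multiplicative A ⧸ MonoidHom.ker φ) = Nat.card (MonoidHom.range φ) :=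
    Nat.card_congr (QuotientGroup.quotientKerEquivRange φ).toEquiv
  have hMA : Nat.card (Multiplicative A) = Nat.card A :=
    Nat.card_congr Multiplicative.toAdd
  have hrange : Nat.card (MonoidHom.range φ) = p ^ (lam : ℕ) := by
    have h5 := hq1
    rw [hMA, hq2, hkercard, hA, hkk, ht] at h5
    have hpt : (0:ℕ) < p ^ t := pow_pos hp.pos t
    have h6 : p ^ t * Nat.card (MonoidHom.range φ) = p ^ t * p ^ (lam : ℕ) :=
      (mul_comm _ _).trans h5.symm
    exact Nat.eq_of_mul_eq_mul_left hpt h6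
  haveI : Fintype Aˣ := Fintype.ofFinite _
  have hbound := IsCyclic.card_pow_eq_one_le (α := Aˣ) (n := p) hp.pos
  have hle : Nat.card (MonoidHom.range φ)
      ≤ (Finset.univ.filter fun g : Aˣ => g ^ p = 1).card := by
    rw [Nat.card_eq_fintype_card, ← Fintype.card_subtype]
    have hmem : ∀ x : MonoidHom.range φ, (x : Aˣ) ^ p = 1 := by
      rintro ⟨x, a, rfl⟩
      exact hupow a.toAdd
    refine Fintype.card_le_of_injective (fun x => ⟨x.1, hmem x⟩) ?_
    intro x y hxy
    rwa [Subtype.mk.injEq, ← Subtype.ext_iff] at hxy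
  have hfin : p ^ (lam : ℕ) ≤ p ^ 1 := by
    rw [pow_one]
    calc p ^ (lam : ℕ) = Nat.card (MonoidHom.range φ) := hrange.symm
      _ ≤ _ := hle
      _ ≤ p := hbound
  have hlle := (Nat.pow_le_pow_iff_right hp.one_lt).mp hfin
  exact le_antisymm hlle lam.pos
end

section
/- Let A be a finite local commutative ring of characteristic a power of 2 whose group of units A* is cyclic. Then |A*| equals 2^λ − 1 for some λ ≥ 1, or 2, or 4. -/
/-! The units `1 + a` with `a * (2 + a) = 0` are square roots of unity, and a cyclic group has at
most two of them, so `a * (2 + a) = 0` has at most one nonzero solution. If `A` is not a field,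
a nonzero `z` annihilating the maximal ideal `𝔪` is such a solution; comparing it with `-2`, with
`u * z` for units `u`, and with square-zero elements of `𝔪` gives `2𝔪 = 0`, `Aˣ = 1 + 𝔪` and
`a ^ 3 = 0` on `𝔪`. Hence `u ^ 4 = 1` for every unit, and `|Aˣ|` divides `4`. If `A` is a field,
`2 ∈ 𝔪 = 0` makes it a finite field of characteristic `2`. -/

open IsLocalRing

theorem IsCyclic.eq_of_sq_eq_one {G : Type*} [Group G] [Finite G] [IsCyclic G] {x y : G}
    (hx : x ^ 2 = 1) (hy : y ^ 2 = 1) (hx1 : x ≠ 1) (hy1 : y ≠ 1) : x = y := by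
  classical
  cases nonempty_fintype G
  by_contra hxy
  have hsub : ({1, x, y} : Finset G) ⊆ ({g | g ^ 2 = 1} : Finset G) := by
    simp [Finset.insert_subset_iff, hx, hy]
  have := (Finset.card_le_card hsub).trans (IsCyclic.card_pow_eq_one_le two_pos)
  rw [Finset.card_eq_three.mpr ⟨1, x, y, hx1.symm, hy1.symm, hxy, rfl⟩] at this
  omega

-- `a ↦ 1 + a` turns solutions of `a * (2 + a) = 0` into square roots of unity.
theorem eq_of_mul_two_add_eq_zero {A : Type*} [CommRing A] [Finite Aˣ] [IsCyclic Aˣ] {a b : A}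
    (ha : a * (2 + a) = 0) (hb : b * (2 + b) = 0) (ha0 : a ≠ 0) (hb0 : b ≠ 0) : a = b := by
  let u := Units.mkOfMulEqOne (1 + a) (1 + a) (by linear_combination ha)
  let v := Units.mkOfMulEqOne (1 + b) (1 + b) (by linear_combination hb)
  have huv : u = v := IsCyclic.eq_of_sq_eq_one
    (Units.ext (by simp [u]; linear_combination ha))
    (Units.ext (by simp [v]; linear_combination hb))
    (fun h => ha0 (by simpa [u] using congrArg Units.val h))
    (fun h => hb0 (by simpa [v] using congrArg Units.val h))
  simpa [u, v] using congrArg Units.val huv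

theorem Ideal.exists_ne_zero_forall_mul_eq_zero_of_isNilpotent {R : Type*} [CommRing R]
    [Nontrivial R] {I : Ideal R} (hI : IsNilpotent I) : ∃ z ≠ (0 : R), ∀ a ∈ I, a * z = 0 := by
  by_contra! h
  obtain ⟨n, hn⟩ := hI
  have hpow : ∀ k, I ^ k ≠ ⊥ := by
    intro k
    induction k with
    | zero => simp
    | succ k ih =>
      obtain ⟨z, hz, hz0⟩ := Submodule.exists_mem_ne_zero_of_ne_bot ih
      obtain ⟨a, ha, haz⟩ := h z hz0
      exact (Submodule.ne_bot_iff _).2 ⟨a * z, pow_succ' I k ▸ Ideal.mul_mem_mul ha hz, haz⟩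
  exact hpow n hn

theorem FiniteField.exists_card_units_eq_two_pow_sub_one (K : Type*) [Field K] [Finite K]
    [CharP K 2] : ∃ n ≥ 1, Nat.card Kˣ = 2 ^ n - 1 := by
  cases nonempty_fintype K
  obtain ⟨n, -, hn⟩ := FiniteField.card K 2
  exact ⟨n, n.pos, by rw [Nat.card_units, Nat.card_eq_fintype_card, hn]⟩

namespace IsLocalRing

variable {A : Type*} [CommRing A] [IsLocalRing A]

theorem two_mem_maximalIdeal_of_charP (s : ℕ) [CharP A (2 ^ s)] : (2 : A) ∈ maximalIdeal A :=
  (mem_maximalIdeal _).2 <|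
    IsNilpotent.not_isUnit ⟨s, by exact_mod_cast CharP.cast_eq_zero A (2 ^ s)⟩

theorem exists_ne_zero_mem_maximalIdeal_forall_mul_eq_zero [IsArtinianRing A]
    (hm : maximalIdeal A ≠ ⊥) :
    ∃ z ≠ (0 : A), z ∈ maximalIdeal A ∧ ∀ a ∈ maximalIdeal A, a * z = 0 := by
  have hnil : IsNilpotent (maximalIdeal A) :=
    (isArtinianRing_iff_isNilpotent_maximalIdeal A).mp inferInstance
  obtain ⟨z, hz0, hz⟩ := Ideal.exists_ne_zero_forall_mul_eq_zero_of_isNilpotent hnil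
  refine ⟨z, hz0, (mem_maximalIdeal z).2 fun hu => hm ?_, hz⟩
  exact (Submodule.eq_bot_iff _).2 fun a ha => (hu.mul_left_eq_zero).1 (hz a ha)

section CyclicUnits

variable [Finite A] [IsCyclic Aˣ]

theorem two_mul_eq_zero_of_mem_maximalIdeal (h2 : (2 : A) ∈ maximalIdeal A)
    (hm : maximalIdeal A ≠ ⊥) {a : A} (ha : a ∈ maximalIdeal A) : 2 * a = 0 := by
  obtain ⟨z, hz0, hzm, hz⟩ := exists_ne_zero_mem_maximalIdeal_forall_mul_eq_zero hm
  by_cases h20 : (2 : A) = 0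
  · simp [h20]
  -- `-2` and `z` are both nonzero solutions of `b * (2 + b) = 0`
  have h : -2 = z := eq_of_mul_two_add_eq_zero (by ring)
    (by linear_combination hz 2 h2 + hz z hzm) (neg_ne_zero.2 h20) hz0
  linear_combination (-a) * h - hz a ha

theorem mul_eq_zero_of_sq_eq_zero (h2 : (2 : A) ∈ maximalIdeal A) (hm : maximalIdeal A ≠ ⊥)
    {a b : A} (ha : a ∈ maximalIdeal A) (hb : b ∈ maximalIdeal A) (hb2 : b ^ 2 = 0) :
    a * b = 0 := by
  obtain ⟨z, hz0, hzm, hz⟩ := exists_ne_zero_mem_maximalIdeal_forall_mul_eq_zero hm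
  rcases eq_or_ne b 0 with rfl | hb0
  · exact mul_zero a
  have hbz : b = z := eq_of_mul_two_add_eq_zero
    (by linear_combination two_mul_eq_zero_of_mem_maximalIdeal h2 hm hb + hb2)
    (by linear_combination hz 2 h2 + hz z hzm) hb0 hz0
  exact hbz ▸ hz a ha

theorem pow_three_eq_zero_of_mem_maximalIdeal (h2 : (2 : A) ∈ maximalIdeal A)
    (hm : maximalIdeal A ≠ ⊥) {a : A} (ha : a ∈ maximalIdeal A) : a ^ 3 = 0 := by
  obtain ⟨n, hn⟩ := (isArtinianRing_iff_isNilpotent_maximalIdeal A).mp inferInstance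
  have hpow : ∀ k, a ^ (k + 3) = 0 → a ^ 3 = 0 := by
    intro k
    induction k with
    | zero => exact id
    | succ k ih =>
      intro hk
      refine ih ?_
      have hb2 : (a ^ (k + 2)) ^ 2 = 0 := by
        rw [← pow_mul, show (k + 2) * 2 = (k + 1 + 3) + k by ring, pow_add, hk, zero_mul]
      have := mul_eq_zero_of_sq_eq_zero h2 hm ha (Ideal.pow_mem_of_mem _ ha _ (by omega)) hb2
      rwa [← pow_succ'] at this
  refine hpow n ?_
  have : a ^ (n + 3) ∈ maximalIdeal A ^ (n + 3) := Ideal.pow_mem_pow ha _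
  rwa [pow_add, hn, zero_mul, Submodule.zero_eq_bot, Ideal.mem_bot] at this

theorem sub_one_mem_maximalIdeal (h2 : (2 : A) ∈ maximalIdeal A) (hm : maximalIdeal A ≠ ⊥)
    (u : Aˣ) : (u : A) - 1 ∈ maximalIdeal A := by
  obtain ⟨z, hz0, hzm, hz⟩ := exists_ne_zero_mem_maximalIdeal_forall_mul_eq_zero hm
  have huz : u * z = z := eq_of_mul_two_add_eq_zero
    (by linear_combination (u : A) * hz 2 h2 + (u : A) ^ 2 * hz z hzm)
    (by linear_combination hz 2 h2 + hz z hzm) (u.mul_right_eq_zero.not.2 hz0) hz0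
  refine (mem_maximalIdeal _).2 fun hu => hz0 ((hu.mul_right_eq_zero).1 ?_)
  linear_combination huz

theorem units_pow_four_eq_one (h2 : (2 : A) ∈ maximalIdeal A) (hm : maximalIdeal A ≠ ⊥)
    (u : Aˣ) : u ^ 4 = 1 := by
  have ha := sub_one_mem_maximalIdeal h2 hm u
  set a := (u : A) - 1
  have h2a := two_mul_eq_zero_of_mem_maximalIdeal h2 hm ha
  have h3 := pow_three_eq_zero_of_mem_maximalIdeal h2 hm ha
  ext
  push_cast
  rw [show (u : A) = 1 + a by ring]
  linear_combination (2 + 3 * a + 2 * a ^ 2) * h2a + a * h3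

theorem card_units_eq_two_or_four (h2 : (2 : A) ∈ maximalIdeal A) (hm : maximalIdeal A ≠ ⊥) :
    Nat.card Aˣ = 2 ∨ Nat.card Aˣ = 4 := by
  obtain ⟨z, hz0, hzm, hz⟩ := exists_ne_zero_mem_maximalIdeal_forall_mul_eq_zero hm
  have hdvd : Nat.card Aˣ ∣ 2 ^ 2 := IsCyclic.exponent_eq_card (α := Aˣ) ▸
    Monoid.exponent_dvd_of_forall_pow_eq_one (units_pow_four_eq_one h2 hm)
  have hnt : Nontrivial Aˣ := by
    refine ⟨Units.mkOfMulEqOne (1 + z) (1 - z) ?_, 1, fun h => hz0 ?_⟩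
    · linear_combination -hz z hzm
    · simpa using congrArg Units.val h
  obtain ⟨k, hk, hcard⟩ := (Nat.dvd_prime_pow Nat.prime_two).1 hdvd
  have := Finite.one_lt_card_iff_nontrivial.2 hnt
  interval_cases k <;> simp_all

end CyclicUnits

end IsLocalRing

theorem stmt12_general {A : Type*} [CommRing A] [IsLocalRing A] [Finite A]
    (s : ℕ) (hchar : CharP A (2 ^ s))
    (hcyc : IsCyclic Aˣ) :
    (∃ lam ≥ 1, Nat.card Aˣ = 2 ^ lam - 1) ∨ Nat.card Aˣ = 2 ∨ Nat.card Aˣ = 4 := by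
  have h2 := two_mem_maximalIdeal_of_charP (A := A) s
  by_cases hm : maximalIdeal A = ⊥
  · left
    let _ : Field A := (isField_iff_maximalIdeal_eq.mpr hm).toField
    have : CharP A 2 :=
      CharTwo.of_one_ne_zero_of_two_eq_zero one_ne_zero (by simpa [hm] using h2)
    exact FiniteField.exists_card_units_eq_two_pow_sub_one A
  · exact Or.inr (card_units_eq_two_or_four h2 hm)

/-- A finite local commutative ring of characteristic a power of 2 with
cyclic unit group has `|A*| = 2^λ - 1` for some `λ ≥ 1`, or `|A*| = 2`, or `|A*| = 4`. -/
theorem stmt12 {A : Type*} [CommRing A] [IsLocalRing A] [Finite A]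
    (s : ℕ) (hs : 0 < s) (hchar : CharP A (2 ^ s))
    (hcyc : IsCyclic Aˣ) :
    (∃ lam ≥ 1, Nat.card Aˣ = 2 ^ lam - 1) ∨ Nat.card Aˣ = 2 ∨ Nat.card Aˣ = 4 :=
  stmt12_general s hchar hcyc
end

section
/- Let A be a finite local commutative ring of characteristic 2 or 4 with cyclic group of units, and let m be the maximal ideal of A. Then 2x = 0 for every x in m. -/
/-- A finite local commutative ring of characteristic 2 or 4 with cyclic
unit group satisfies `2x = 0` for every `x` in the maximal ideal. -/
theorem stmt13 {A : Type*} [CommRing A] [IsLocalRing A] [Finite A]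
    (hchar : CharP A 2 ∨ CharP A 4) (hcyc : IsCyclic Aˣ) :
    ∀ x ∈ IsLocalRing.maximalIdeal A, 2 * x = 0 := by
  classical
  intro x hx
  rcases hchar with h2 | h4
  · have h : (2 : A) = 0 := by exact_mod_cast CharP.cast_eq_zero A 2
    simp [h]
  · by_contra h2x
    have h4z : (4 : A) = 0 := by exact_mod_cast CharP.cast_eq_zero A 4
    have h2ne : (2 : A) ≠ 0 := by
      intro h
      have := (CharP.cast_eq_zero_iff A 4 2).mp (by exact_mod_cast h)
      omega
    have hxm : x ∈ nonunits A := hx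
    have hxm' : -x ∈ nonunits A := (IsLocalRing.maximalIdeal A).neg_mem hx
    have hu1 : IsUnit (1 + x) := by
      have := IsLocalRing.isUnit_one_sub_self_of_mem_nonunits (-x) hxm'
      simpa using this
    have hu2 : IsUnit (1 - x) := IsLocalRing.isUnit_one_sub_self_of_mem_nonunits x hxm
    set a := hu1.unit with ha
    set b := hu2.unit with hb
    have hav : (a : A) = 1 + x := rfl
    have hbv : (b : A) = 1 - x := rfl
    have hsq : a ^ 2 = b ^ 2 := by
      ext
      push_cast [hav, hbv]
      have h4x : (4 : A) * x = 0 := by rw [h4z]; ring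
      linear_combination h4x
    set t : Aˣ := a * b⁻¹ with ht
    have htsq : t ^ 2 = 1 := by
      rw [ht, mul_pow, inv_pow, hsq, mul_inv_eq_one]
    have ht1 : t ≠ 1 := by
      intro h
      have : a = b := by rwa [ht, mul_inv_eq_one] at h
      have : (1 : A) + x = 1 - x := by rw [← hav, ← hbv, this]
      apply h2x
      linear_combination this
    have htm1 : t ≠ -1 := by
      intro h
      have hab : a = -b := by
        have := congrArg (· * b) h
        simpa [ht, mul_assoc] using this
      have : (1 : A) + x = -(1 - x) := by
        rw [← hav, hab]; push_cast [hbv]; ring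
      apply h2ne
      linear_combination this
    have h1m1 : (1 : Aˣ) ≠ -1 := by
      intro h
      have hv : ((1 : Aˣ) : A) = ((-1 : Aˣ) : A) := congrArg Units.val h
      push_cast at hv
      exact h2ne (by linear_combination hv)
    have := Fintype.ofFinite Aˣ
    have hle := IsCyclic.card_pow_eq_one_le (α := Aˣ) (n := 2) (by norm_num)
    have hsub : ({1, -1, t} : Finset Aˣ) ⊆ Finset.univ.filter fun u => u ^ 2 = 1 := by
      intro u hu
      simp only [Finset.mem_insert, Finset.mem_singleton] at hu
      rcases hu with rfl | rfl | rfl <;> simp [htsq]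
    have hcard : ({1, -1, t} : Finset Aˣ).card = 3 := by
      rw [Finset.card_insert_of_notMem (by simp [h1m1, ht1.symm]),
        Finset.card_insert_of_notMem (by simp [htm1.symm]), Finset.card_singleton]
    have := Finset.card_le_card hsub
    omega
end

section
/- Let p > 2 be a prime, a₀ ≥ 0, and R = (ℤ/p^{a₀+1}ℤ)[t]/(f(t)) with f monic of degree λ irreducible mod p. For μ ∈ pR and any l ≥ 0, one has (1 + μ)^{p^l} = 1 if and only if p^l μ = 0. -/
/-!
Write `(1 + μ)^p - 1 = μ · ∑_{i<p} (1 + μ)^i`. For `μ ∈ pR` and `p` odd, the geometric sum is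
`p` modulo `p²` (`odd_sq_dvd_geom_sum₂_sub`: the linear terms add up to `p(p-1)/2 · μ`), so
`(1 + μ)^p = 1 + pμ(1 + ps)`. Since `p^l μ (1 + ps)` again lies in `pR`, iterating gives
`(1 + μ)^{p^l} = 1 + p^l μ (1 + ps)`, and `1 + ps` is a unit because `p` is nilpotent in `R`.
-/

/-- The ring `R = (ℤ/p^{a₀+1}ℤ)[t]/(f(t))`. -/
abbrev FuchsR (p a0 : ℕ) (f : Polynomial (ZMod (p ^ (a0 + 1)))) :=
  Polynomial (ZMod (p ^ (a0 + 1))) ⧸ Ideal.span {f}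

section OnePlusPow

variable {R : Type*} [CommRing R] {p : ℕ}

theorem exists_one_add_pow_eq_of_odd (hp : Odd p) {μ : R} (hμ : (p : R) ∣ μ) :
    ∃ s : R, (1 + μ) ^ p = 1 + p * μ * (1 + p * s) := by
  obtain ⟨ν, rfl⟩ := hμ
  obtain ⟨s, hs⟩ := odd_sq_dvd_geom_sum₂_sub (1 : R) ν hp
  have hgeom := geom_sum₂_mul (1 + (p : R) * ν) 1 p
  simp only [one_pow, mul_one, add_sub_cancel_left] at hs hgeom
  exact ⟨s, by linear_combination -hgeom + (p * ν) * hs⟩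

theorem exists_one_add_pow_pow_eq_of_odd (hp : Odd p) {μ : R} (hμ : (p : R) ∣ μ) (l : ℕ) :
    ∃ s : R, (1 + μ) ^ p ^ l = 1 + p ^ l * μ * (1 + p * s) := by
  induction l with
  | zero => exact ⟨0, by simp⟩
  | succ l ih =>
    obtain ⟨s, hs⟩ := ih
    obtain ⟨t, ht⟩ := exists_one_add_pow_eq_of_odd hp
      (Dvd.dvd.mul_right (Dvd.dvd.mul_left hμ _) (1 + p * s))
    refine ⟨s + t + p * s * t, ?_⟩
    rw [pow_succ, pow_mul, hs, ht]
    ring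

theorem one_add_pow_pow_eq_one_iff_of_odd (hp : Odd p) (hnil : IsNilpotent (p : R)) {μ : R}
    (hμ : (p : R) ∣ μ) (l : ℕ) : (1 + μ) ^ p ^ l = 1 ↔ (p : R) ^ l * μ = 0 := by
  obtain ⟨s, hs⟩ := exists_one_add_pow_pow_eq_of_odd hp hμ l
  have hunit : IsUnit (1 + p * s) :=
    ((Commute.all _ s).isNilpotent_mul_right hnil).isUnit_one_add
  rw [hs, add_eq_left, hunit.mul_left_eq_zero]

end OnePlusPow

theorem isNilpotent_natCast_of_algebra_zmod_pow {A : Type*} [Semiring A] (p k : ℕ)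
    [Algebra (ZMod (p ^ k)) A] : IsNilpotent (p : A) :=
  ⟨k, by rw [← map_natCast (algebraMap (ZMod (p ^ k)) A), ← map_pow, ← Nat.cast_pow,
    ZMod.natCast_self, map_zero]⟩

theorem stmt14_general (p : ℕ) (hp : p.Prime) (hodd : p ≠ 2) (a0 : ℕ)
    (f : Polynomial (ZMod (p ^ (a0 + 1))))
    (μ : FuchsR p a0 f) (hμ : μ ∈ Ideal.span {(p : FuchsR p a0 f)}) (l : ℕ) :
    (1 + μ) ^ p ^ l = 1 ↔ (p : FuchsR p a0 f) ^ l * μ = 0 :=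
  one_add_pow_pow_eq_one_iff_of_odd (hp.odd_of_ne_two hodd)
    (isNilpotent_natCast_of_algebra_zmod_pow p (a0 + 1)) (Ideal.mem_span_singleton.mp hμ) l

/-- Let `p > 2` be prime, `R = (ℤ/p^{a₀+1}ℤ)[t]/(f(t))` with `f` monic of
degree `λ` irreducible mod `p`. For `μ ∈ pR` and `l ≥ 0`,
`(1 + μ)^{p^l} = 1 ↔ p^l μ = 0`. -/
theorem stmt14 (p : ℕ) (hp : p.Prime) (hodd : p ≠ 2) (a0 lam : ℕ) (hlam : 1 ≤ lam)
    (f : Polynomial (ZMod (p ^ (a0 + 1)))) (hf : f.Monic) (hdeg : f.natDegree = lam)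
    (hirr : Irreducible
      (f.map (ZMod.castHom (dvd_pow_self p (Nat.succ_ne_zero a0)) (ZMod p))))
    (μ : FuchsR p a0 f) (hμ : μ ∈ Ideal.span {(p : FuchsR p a0 f)}) (l : ℕ) :
    (1 + μ) ^ p ^ l = 1 ↔ (p : FuchsR p a0 f) ^ l * μ = 0 :=
  stmt14_general p hp hodd a0 f μ hμ l
end

section
/- Let p > 2 be prime, a₀ ≥ 0, and R = (ℤ/p^{a₀+1}ℤ)[t]/(f(t)) with f monic of degree λ irreducible mod p. Then the multiplicative group 1 + pR is isomorphic to (ℤ/p^{a₀}ℤ)^λ. -/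
/-!
The power basis of `R` makes `R ≅ (ℤ/p^{a₀+1})^λ` as an additive group. Then `U = 1 + pR` has
exponent dividing `p^{a₀}` (because `p^{k+1} ∣ u^{p^k} - 1`), and `u ↦ u - 1` is a bijection
`U ≃ pR`, so `|U| = |R| / |ker (p · -)| ≥ p^{a₀λ}`. For odd `p`, if `x = py` then
`(1 + x)^p - 1 = px · (1 + p(…))` with the second factor a unit, so `(1 + x)^p = 1` forces
`px = 0`: `U` has at most `p^λ` elements of order dividing `p`. By the structure theorem `U` is a
product of at most `λ` cyclic groups of order at most `p^{a₀}`, and the order bound forces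
exactly `λ` of them, each of order `p^{a₀}`.
-/

@[to_additive]
theorem Nat.card_pow_eq_one_pi {ι : Type*} [Fintype ι] {M : ι → Type*} [∀ i, Monoid (M i)]
    (n : ℕ) : Nat.card {g : ∀ i, M i // g ^ n = 1} = ∏ i, Nat.card {c : M i // c ^ n = 1} := by
  rw [← Nat.card_pi]
  exact Nat.card_congr ((Equiv.subtypeEquivRight (q := fun g : ∀ i, M i => ∀ i, g i ^ n = 1)
    fun _ => funext_iff).trans (Equiv.subtypePiEquivPi (p := fun _ c => c ^ n = 1)))

theorem le_card_pow_eq_one_of_dvd_card {G : Type*} [Group G] [Finite G] {p : ℕ} [Fact p.Prime]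
    (hdvd : p ∣ Nat.card G) : p ≤ Nat.card {g : G // g ^ p = 1} := by
  obtain ⟨x, hx⟩ := exists_prime_orderOf_dvd_card' p hdvd
  calc p = Nat.card (Subgroup.zpowers x) := by rw [Nat.card_zpowers, hx]
    _ ≤ Nat.card {g : G // g ^ p = 1} :=
      Nat.card_mono (s := (Subgroup.zpowers x : Set G)) (t := {g | g ^ p = 1}) (Set.toFinite _)
        fun _ hg => orderOf_dvd_iff_pow_eq_one.mp (hx ▸ orderOf_dvd_of_mem_zpowers hg)

theorem CommGroup.exists_mulEquiv_pi_zmod_pow_of_pow_eq_one {G : Type*} [CommGroup G] [Finite G]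
    {p a : ℕ} (hp : p.Prime) (hexp : ∀ g : G, g ^ p ^ a = 1) :
    ∃ (ι : Type) (_ : Fintype ι) (e : ι → ℕ), (∀ i, 0 < e i ∧ e i ≤ a) ∧
      Nonempty (G ≃* ∀ i, Multiplicative (ZMod (p ^ e i))) := by
  classical
  obtain ⟨ι, _, m, hm, ⟨E⟩⟩ := equiv_prod_multiplicative_zmod_of_finite G
  have hdvd (i : ι) : m i ∣ p ^ a := by
    have : orderOf (E.symm (Pi.mulSingle i (.ofAdd 1))) = m i := by
      simp only [MulEquiv.orderOf_eq, orderOf_piMulSingle, orderOf_ofAdd_eq_addOrderOf,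
        ZMod.addOrderOf_one]
    exact this ▸ orderOf_dvd_of_pow_eq_one (hexp _)
  choose e he_le he using fun i => (Nat.dvd_prime_pow hp).mp (hdvd i)
  obtain rfl : m = fun i => p ^ e i := funext he
  exact ⟨ι, inferInstance, e,
    fun i => ⟨Nat.pos_of_ne_zero fun h => by simpa [h] using hm i, he_le i⟩, ⟨E⟩⟩

theorem CommGroup.nonempty_mulEquiv_pi_zmod_of_card_le {G : Type*} [CommGroup G] [Finite G]
    {p a n : ℕ} (hp : p.Prime) (hexp : ∀ g : G, g ^ p ^ a = 1) (hcard : p ^ (a * n) ≤ Nat.card G)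
    (htors : Nat.card {g : G // g ^ p = 1} ≤ p ^ n) :
    Nonempty (G ≃* Multiplicative (Fin n → ZMod (p ^ a))) := by
  have := Fact.mk hp
  rcases a.eq_zero_or_pos with rfl | ha
  · have : Unique G := ⟨⟨1⟩, fun g => by simpa using hexp g⟩
    have : Unique (ZMod (p ^ 0)) := inferInstanceAs (Unique (ZMod 1))
    exact ⟨MulEquiv.ofUnique⟩
  obtain ⟨ι, _, e, he, ⟨E⟩⟩ := exists_mulEquiv_pi_zmod_pow_of_pow_eq_one hp hexp
  have hcardG : Nat.card G = p ^ ∑ i, e i := by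
    rw [Nat.card_congr E.toEquiv, Nat.card_pi, ← Finset.prod_pow_eq_pow_sum]
    simp
  have htorsG : p ^ Fintype.card ι ≤ Nat.card {g : G // g ^ p = 1} := by
    rw [Nat.card_congr (E.toEquiv.subtypeEquiv (q := fun x => x ^ p = 1)
      fun g => by rw [← E.map_eq_one_iff, map_pow]; rfl), Nat.card_pow_eq_one_pi]
    refine Finset.pow_card_le_prod _ _ _ fun i _ => le_card_pow_eq_one_of_dvd_card ?_
    rw [Nat.card_congr Multiplicative.toAdd, Nat.card_zmod]
    exact dvd_pow_self p (he i).1.ne'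
  have hι : Fintype.card ι ≤ n := (Nat.pow_le_pow_iff_right hp.one_lt).mp (htorsG.trans htors)
  have hsum : a * n ≤ ∑ i, e i := (Nat.pow_le_pow_iff_right hp.one_lt).mp (hcardG ▸ hcard)
  have hsum_le : ∑ i, e i ≤ ∑ _i : ι, a := Finset.sum_le_sum fun i _ => (he i).2
  rw [Finset.sum_const, Finset.card_univ, smul_eq_mul] at hsum_le
  have hιn : Fintype.card ι = n := by nlinarith
  have hea (i : ι) : e i = a := by
    refine (Finset.sum_eq_sum_iff_of_le fun i _ => (he i).2).mp ?_ i (Finset.mem_univ i)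
    rw [Finset.sum_const, Finset.card_univ, smul_eq_mul]
    nlinarith
  exact ⟨E.trans <| (MulEquiv.piCongrRight fun i =>
    (ZMod.ringEquivCongr (by rw [hea i])).toAddEquiv.toMultiplicative).trans <|
      (MulEquiv.arrowCongr (Fintype.equivFinOfCardEq hιn) (MulEquiv.refl _)).trans
        (MulEquiv.funMultiplicative _ _).symm⟩

theorem card_nsmul_eq_zero_le_of_addEquiv_pi_zmod {A ι : Type*} [AddCommGroup A] [Fintype ι]
    {m : ℕ} [NeZero m] {n : ℕ} (hn : 0 < n) (e : A ≃+ (ι → ZMod m)) :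
    Nat.card {x : A // n • x = 0} ≤ n ^ Fintype.card ι := by
  classical
  rw [Nat.card_congr (e.toEquiv.subtypeEquiv (q := fun v => n • v = 0)
    fun x => by rw [← e.map_eq_zero_iff, map_nsmul]; rfl), Nat.card_nsmul_eq_zero_pi]
  refine Finset.prod_le_pow_card _ _ _ fun i _ => ?_
  rw [Nat.card_eq_fintype_card, Fintype.card_subtype]
  exact IsAddCyclic.card_nsmul_eq_zero_le hn

theorem pow_le_card_range_nsmul_of_addEquiv_pi_zmod {A ι : Type*} [AddCommGroup A] [Fintype ι]
    {p k : ℕ} (hp : 0 < p) (e : A ≃+ (ι → ZMod (p ^ (k + 1)))) :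
    p ^ (k * Fintype.card ι) ≤ Nat.card (nsmulAddMonoidHom p : A →+ A).range := by
  have : NeZero (p ^ (k + 1)) := ⟨pow_ne_zero _ hp.ne'⟩
  have : Finite A := .of_equiv _ e.symm.toEquiv
  have hA : Nat.card A = p ^ (k * Fintype.card ι) * p ^ Fintype.card ι := by
    rw [Nat.card_congr e.toEquiv, Nat.card_fun, Nat.card_zmod, Nat.card_eq_fintype_card, ← pow_mul,
      ← pow_add, add_mul, one_mul]
  have hker : Nat.card (nsmulAddMonoidHom p : A →+ A).ker ≤ p ^ Fintype.card ι :=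
    card_nsmul_eq_zero_le_of_addEquiv_pi_zmod hp e
  have hmul := AddSubgroup.card_mul_index (nsmulAddMonoidHom p : A →+ A).ker
  rw [AddSubgroup.index_ker, hA] at hmul
  have hpos : 0 < p ^ Fintype.card ι := pow_pos hp _
  nlinarith

theorem exists_one_add_pow_eq {S : Type*} [CommRing S] (x : S) (n : ℕ) :
    ∃ z : S, (1 + x) ^ n = 1 + n * x + n.choose 2 * x ^ 2 + x ^ 3 * z := by
  induction n with
  | zero => exact ⟨0, by simp⟩
  | succ n ih =>
    obtain ⟨z, hz⟩ := ih
    refine ⟨z + n.choose 2 + z * x, ?_⟩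
    rw [pow_succ, hz, Nat.choose_succ_succ, Nat.choose_one_right]
    push_cast
    ring

theorem mul_eq_zero_of_one_add_pow_eq_one {S : Type*} [CommRing S] {p : ℕ} (hodd : Odd p)
    (hnil : IsNilpotent (p : S)) {x : S} (hx : (p : S) ∣ x) (h : (1 + x) ^ p = 1) :
    (p : S) * x = 0 := by
  obtain ⟨y, rfl⟩ := hx
  obtain ⟨z, hz⟩ := exists_one_add_pow_eq ((p : S) * y) p
  obtain ⟨q, rfl⟩ := hodd
  have hchoose : ((2 * q + 1).choose 2 : S) = (2 * q + 1 : ℕ) * q := by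
    rw [Nat.choose_two_right, show (2 * q + 1) * (2 * q + 1 - 1) = 2 * ((2 * q + 1) * q) by
      rw [Nat.add_sub_cancel]; ring, Nat.mul_div_cancel_left _ two_pos]
    push_cast; ring
  have hunit : IsUnit (1 + ((2 * q + 1 : ℕ) : S) * (q * y + y ^ 2 * z)) :=
    ((Commute.all _ _).isNilpotent_mul_right hnil).isUnit_one_add
  rw [← hunit.mul_left_eq_zero]
  linear_combination h - hz - ((2 * q + 1 : ℕ) * y : S) ^ 2 * hchoose

theorem pow_pow_eq_one_of_dvd_sub_one {S : Type*} [CommRing S] {p a : ℕ}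
    (hp : (p : S) ^ (a + 1) = 0) {u : S} (hu : (p : S) ∣ u - 1) : u ^ p ^ a = 1 := by
  have := dvd_sub_pow_of_dvd_sub hu a
  rwa [one_pow, hp, zero_dvd_iff, sub_eq_zero] at this

noncomputable def IsNilpotent.unitsSubOneDvdEquiv {S : Type*} [CommRing S] {a : S}
    (ha : IsNilpotent a) : {u : Sˣ // a ∣ u - 1} ≃ {x : S // a ∣ x} where
  toFun u := ⟨u.1 - 1, u.2⟩
  invFun x := ⟨IsUnit.unit (a := 1 + x.1) (by
    obtain ⟨c, hc⟩ := x.2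
    exact hc ▸ ((Commute.all _ _).isNilpotent_mul_right ha).isUnit_one_add), by simpa using x.2⟩
  left_inv u := by ext; simp
  right_inv x := by ext; simp

theorem card_pow_eq_one_le_card_nsmul_eq_zero {S : Type*} [CommRing S] [Finite S] {p : ℕ}
    (hodd : Odd p) (hnil : IsNilpotent (p : S)) (U : Subgroup Sˣ)
    (hU : ∀ u ∈ U, (p : S) ∣ u - 1) :
    Nat.card {u : U // u ^ p = 1} ≤ Nat.card {x : S // p • x = 0} := by
  refine Nat.card_le_card_of_injective (fun u => ⟨((u.1 : Sˣ) : S) - 1, ?_⟩) fun u v huv => ?_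
  · have hu : ((u.1 : Sˣ) : S) ^ p = 1 := by
      simpa using congrArg (fun v : U => ((v : Sˣ) : S)) u.2
    rw [nsmul_eq_mul]
    refine mul_eq_zero_of_one_add_pow_eq_one hodd hnil (hU _ u.1.2) ?_
    rwa [add_sub_cancel]
  · exact Subtype.ext (Subtype.ext (Units.ext (sub_left_inj.mp (congrArg Subtype.val huv))))

theorem stmt15_general (p : ℕ) (hp : p.Prime) (hodd : p ≠ 2) (a0 lam : ℕ)
    (f : Polynomial (ZMod (p ^ (a0 + 1)))) (hf : f.Monic) (hdeg : f.natDegree = lam)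
    (U : Subgroup (FuchsR p a0 f)ˣ)
    (hU : ∀ u : (FuchsR p a0 f)ˣ,
      u ∈ U ↔ (u : FuchsR p a0 f) - 1 ∈ Ideal.span {(p : FuchsR p a0 f)}) :
    Nonempty (U ≃* Multiplicative (Fin lam → ZMod (p ^ a0))) := by
  have : NeZero (p ^ (a0 + 1)) := ⟨pow_ne_zero _ hp.ne_zero⟩
  let e := (AdjoinRoot.powerBasis' hf).basis.equivFun.toAddEquiv
  have hdim : Fintype.card (Fin (AdjoinRoot.powerBasis' hf).dim) = lam := by simp [hdeg]
  have : Finite (FuchsR p a0 f) := .of_equiv _ e.symm.toEquiv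
  have hpR : (p : FuchsR p a0 f) ^ (a0 + 1) = 0 := by
    rw [← Nat.cast_pow, ← map_natCast (algebraMap (ZMod (p ^ (a0 + 1))) _), ZMod.natCast_self,
      map_zero]
  have hnil : IsNilpotent (p : FuchsR p a0 f) := ⟨a0 + 1, hpR⟩
  have hU' (u : (FuchsR p a0 f)ˣ) : u ∈ U ↔ (p : FuchsR p a0 f) ∣ u - 1 :=
    (hU u).trans Ideal.mem_span_singleton
  refine CommGroup.nonempty_mulEquiv_pi_zmod_of_card_le (G := U) hp (fun u => ?_) ?_ ?_
  · exact Subtype.ext (Units.ext (pow_pow_eq_one_of_dvd_sub_one hpR ((hU' u).mp u.2)))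
  · calc p ^ (a0 * lam) ≤ Nat.card (nsmulAddMonoidHom p : FuchsR p a0 f →+ _).range :=
          hdim ▸ pow_le_card_range_nsmul_of_addEquiv_pi_zmod hp.pos e
      _ = Nat.card {x : FuchsR p a0 f // (p : FuchsR p a0 f) ∣ x} :=
          Nat.card_congr (Equiv.subtypeEquivRight fun x => by simp [Dvd.dvd, eq_comm])
      _ = Nat.card U :=
          (Nat.card_congr ((Equiv.subtypeEquivRight hU').trans hnil.unitsSubOneDvdEquiv)).symm
  · calc Nat.card {u : U // u ^ p = 1} ≤ Nat.card {x : FuchsR p a0 f // p • x = 0} :=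
          card_pow_eq_one_le_card_nsmul_eq_zero (hp.odd_of_ne_two hodd) hnil U
            fun u hu => (hU' u).mp hu
      _ ≤ p ^ lam := hdim ▸ card_nsmul_eq_zero_le_of_addEquiv_pi_zmod hp.pos e

/-- Let `p > 2` be prime and `R = (ℤ/p^{a₀+1}ℤ)[t]/(f(t))` with `f` monic
of degree `λ` irreducible mod `p`. Then the multiplicative group `1 + pR` is isomorphic
to `(ℤ/p^{a₀}ℤ)^λ`. -/
theorem stmt15 (p : ℕ) (hp : p.Prime) (hodd : p ≠ 2) (a0 lam : ℕ) (hlam : 1 ≤ lam)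
    (f : Polynomial (ZMod (p ^ (a0 + 1)))) (hf : f.Monic) (hdeg : f.natDegree = lam)
    (hirr : Irreducible
      (f.map (ZMod.castHom (dvd_pow_self p (Nat.succ_ne_zero a0)) (ZMod p))))
    (U : Subgroup (FuchsR p a0 f)ˣ)
    (hU : ∀ u : (FuchsR p a0 f)ˣ,
      u ∈ U ↔ (u : FuchsR p a0 f) - 1 ∈ Ideal.span {(p : FuchsR p a0 f)}) :
    Nonempty (U ≃* Multiplicative (Fin lam → ZMod (p ^ a0))) :=
  stmt15_general p hp hodd a0 lam f hf hdeg U hU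
end

section
/- Let a₀ ≥ 2 and R = (ℤ/2^{a₀+1}ℤ)[t]/(f(t)) with f monic of degree λ irreducible mod 2. For μ ∈ 4R and any l ≥ 0, one has (1 + μ)^{2^l} = 1 if and only if 2^l μ = 0; consequently 1 + 4R ≅ (ℤ/2^{a₀−1}ℤ)^λ. -/
set_option maxHeartbeats 1000000
set_option synthInstance.maxHeartbeats 400000


private lemma two_pow_zero (m : ℕ) : (2 : ZMod (2 ^ m)) ^ m = 0 := by
  have h : ((2 ^ m : ℕ) : ZMod (2 ^ m)) = 0 := ZMod.natCast_self _
  push_cast at h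
  exact h

private lemma aux_pow_two_pow {R : Type*} [CommRing R] (x : R) (l : ℕ) :
    ∃ y : R, (1 + 4 * x) ^ 2 ^ l = 1 + 2 ^ l * (4 * x) * (1 + 2 * y) := by
  induction l with
  | zero => exact ⟨0, by ring⟩
  | succ l ih =>
    obtain ⟨y, hy⟩ := ih
    refine ⟨y + 2 ^ l * x * (1 + 2 * y) ^ 2, ?_⟩
    rw [pow_succ, pow_mul, hy]
    ring

private lemma aux_part1 {R : Type*} [CommRing R] {m : ℕ} (h2 : (2 : R) ^ m = 0)
    (x : R) (l : ℕ) :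
    (1 + 4 * x) ^ 2 ^ l = 1 ↔ (2 : R) ^ l * (4 * x) = 0 := by
  obtain ⟨y, hy⟩ := aux_pow_two_pow x l
  have hu : IsUnit (1 + 2 * y) := by
    refine IsNilpotent.isUnit_one_add ⟨m, ?_⟩
    rw [mul_pow, h2, zero_mul]
  constructor
  · intro h
    rw [hy] at h
    have : 2 ^ l * (4 * x) * (1 + 2 * y) = 0 := by linear_combination h
    exact (hu.mul_left_eq_zero).mp this
  · intro h
    rw [hy, h, zero_mul, add_zero]

private def zshift (e k : ℕ) : ZMod (2 ^ e) →+ ZMod (2 ^ (e + k)) :=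
  ZMod.lift (2 ^ e)
    ⟨{ toFun := fun n : ℤ => 2 ^ k * (n : ZMod (2 ^ (e + k)))
       map_zero' := by simp
       map_add' := by intros; push_cast; ring }, by
      show (2 : ZMod (2 ^ (e + k))) ^ k * (((2 ^ e : ℕ) : ℤ) : ZMod (2 ^ (e + k))) = 0
      have h := two_pow_zero (e + k)
      push_cast
      rw [mul_comm, ← pow_add, ← h, add_comm]⟩

private lemma zshift_apply (e k : ℕ) (w : ℕ) :
    zshift e k ((w : ℕ) : ZMod (2 ^ e)) = 2 ^ k * (w : ZMod (2 ^ (e + k))) := by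
  have : ((w : ℤ) : ZMod (2 ^ e)) = ((w : ℕ) : ZMod (2 ^ e)) := by push_cast; ring
  rw [← this, zshift, ZMod.lift_coe]
  show (2 : ZMod (2 ^ (e + k))) ^ k * ((w : ℤ) : ZMod (2 ^ (e + k))) = _
  push_cast
  ring

private lemma zshift_val (e k : ℕ) (z : ZMod (2 ^ e)) :
    zshift e k z = 2 ^ k * (z.val : ZMod (2 ^ (e + k))) := by
  have : NeZero (2 ^ e) := ⟨by positivity⟩
  conv_lhs => rw [← ZMod.natCast_rightInverse z]
  exact zshift_apply e k z.val

private lemma zshift_inj (e k : ℕ) : Function.Injective (zshift e k) := by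
  have he : NeZero (2 ^ e) := ⟨by positivity⟩
  intro z₁ z₂ h
  rw [← sub_eq_zero, ← map_sub] at h
  set z := z₁ - z₂ with hz
  rw [zshift_val] at h
  have : ((2 ^ k * z.val : ℕ) : ZMod (2 ^ (e + k))) = 0 := by push_cast; exact h
  rw [ZMod.natCast_eq_zero_iff] at this
  have hdvd : 2 ^ e ∣ z.val := by
    rw [pow_add, mul_comm (2 ^ e) (2 ^ k)] at this
    exact (mul_dvd_mul_iff_left (pow_ne_zero k (two_ne_zero))).mp this
  have hz0 : z.val = 0 := Nat.eq_zero_of_dvd_of_lt hdvd (ZMod.val_lt z)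
  have hzz : z = 0 := by
    have := ZMod.natCast_rightInverse (n := 2 ^ e) z
    rw [hz0] at this
    simpa using this.symm
  exact sub_eq_zero.mp hzz

private lemma zshift_range (e k : ℕ) (y : ZMod (2 ^ (e + k))) :
    (∃ z, zshift e k z = y) ↔ ∃ w : ZMod (2 ^ (e + k)), y = 2 ^ k * w := by
  have hM : NeZero (2 ^ (e + k)) := ⟨by positivity⟩
  constructor
  · rintro ⟨z, rfl⟩
    exact ⟨(z.val : ZMod (2 ^ (e + k))), (zshift_val e k z)⟩
  · rintro ⟨w, rfl⟩
    refine ⟨((w.val : ℕ) : ZMod (2 ^ e)), ?_⟩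
    rw [zshift_apply, ZMod.natCast_rightInverse w]

private lemma zshift_ann (e k : ℕ) (y : ZMod (2 ^ (e + k))) :
    (∃ z, zshift e k z = y) ↔ (2 : ZMod (2 ^ (e + k))) ^ e * y = 0 := by
  have hM : NeZero (2 ^ (e + k)) := ⟨by positivity⟩
  rw [zshift_range]
  constructor
  · rintro ⟨w, rfl⟩
    rw [← mul_assoc, ← pow_add, two_pow_zero, zero_mul]
  · intro h
    have h2 : ((2 ^ e * y.val : ℕ) : ZMod (2 ^ (e + k))) = 0 := by
      push_cast
      rw [ZMod.natCast_rightInverse y]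
      exact h
    rw [ZMod.natCast_eq_zero_iff] at h2
    have h4 : 2 ^ e * 2 ^ k ∣ 2 ^ e * y.val := by rw [← pow_add]; exact h2
    have h3 : 2 ^ k ∣ y.val :=
      (mul_dvd_mul_iff_left (pow_ne_zero e (two_ne_zero))).mp h4
    obtain ⟨c, hc⟩ := h3
    refine ⟨(c : ZMod (2 ^ (e + k))), ?_⟩
    have : ((y.val : ℕ) : ZMod (2 ^ (e + k))) = y := ZMod.natCast_rightInverse y
    rw [← this, hc]
    push_cast
    ring

private lemma zshift_tors (e k : ℕ) (c : ℕ) (z : ZMod (2 ^ e)) :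
    (c : ZMod (2 ^ (e + k))) * zshift e k z = 0 ↔ (c : ZMod (2 ^ e)) * z = 0 := by
  have h : (c : ZMod (2 ^ (e + k))) * zshift e k z = zshift e k ((c : ZMod (2 ^ e)) * z) := by
    rw [← nsmul_eq_mul, ← nsmul_eq_mul, map_nsmul]
  rw [h]
  constructor
  · intro hh
    exact zshift_inj e k (by rw [hh, map_zero])
  · intro hh
    rw [hh, map_zero]

private lemma zshift_card (e k : ℕ) :
    Nat.card {y : ZMod (2 ^ (e + k)) // (2 : ZMod (2 ^ (e + k))) ^ e * y = 0} = 2 ^ e := by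
  rw [← Nat.card_zmod (2 ^ e)]
  apply Nat.card_congr
  refine (Equiv.ofBijective (fun z => (⟨zshift e k z, (zshift_ann e k _).mp ⟨z, rfl⟩⟩ :
    {y : ZMod (2 ^ (e + k)) // (2 : ZMod (2 ^ (e + k))) ^ e * y = 0})) ⟨?_, ?_⟩).symm
  · intro a b h
    exact zshift_inj e k (congrArg Subtype.val h)
  · rintro ⟨y, hy⟩
    obtain ⟨z, hz⟩ := (zshift_ann e k y).mpr hy
    exact ⟨z, Subtype.ext hz⟩

private lemma tors_card (m e : ℕ) (h : e ≤ m) :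
    Nat.card {y : ZMod (2 ^ m) // (2 : ZMod (2 ^ m)) ^ e * y = 0} = 2 ^ e := by
  obtain ⟨k, rfl⟩ : ∃ k, m = e + k := ⟨m - e, by omega⟩
  exact zshift_card e k

/-- The ring `R = (ℤ/2^{a₀+1}ℤ)[t]/(f(t))`. -/
abbrev FuchsR2 (a0 : ℕ) (f : Polynomial (ZMod (2 ^ (a0 + 1)))) :=
  Polynomial (ZMod (2 ^ (a0 + 1))) ⧸ Ideal.span {f}

/-- Let `a₀ ≥ 2` and `R = (ℤ/2^{a₀+1}ℤ)[t]/(f(t))` with `f` monic of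
degree `λ` irreducible mod 2. For `μ ∈ 4R` and `l ≥ 0`,
`(1 + μ)^{2^l} = 1 ↔ 2^l μ = 0`; consequently `1 + 4R ≅ (ℤ/2^{a₀-1}ℤ)^λ`. -/
theorem stmt18 (a0 lam : ℕ) (ha0 : 2 ≤ a0) (hlam : 1 ≤ lam)
    (f : Polynomial (ZMod (2 ^ (a0 + 1)))) (hf : f.Monic) (hdeg : f.natDegree = lam)
    (hirr : Irreducible
      (f.map (ZMod.castHom (dvd_pow_self 2 (Nat.succ_ne_zero a0)) (ZMod 2)))) :
    (∀ μ ∈ Ideal.span {(4 : FuchsR2 a0 f)}, ∀ l : ℕ,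
      (1 + μ) ^ 2 ^ l = 1 ↔ (2 : FuchsR2 a0 f) ^ l * μ = 0) ∧
    ∀ U : Subgroup (FuchsR2 a0 f)ˣ,
      (∀ u : (FuchsR2 a0 f)ˣ,
        u ∈ U ↔ (u : FuchsR2 a0 f) - 1 ∈ Ideal.span {(4 : FuchsR2 a0 f)}) →
      Nonempty (U ≃* Multiplicative (Fin lam → ZMod (2 ^ (a0 - 1)))) := by
  obtain ⟨d, rfl⟩ : ∃ d, a0 = d + 2 := ⟨a0 - 2, by omega⟩
  clear ha0 hirr
  have hNZ : NeZero (2 ^ (d + 2 + 1)) := ⟨by positivity⟩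
  -- characteristic facts
  have h2R : (2 : FuchsR2 (d + 2) f) ^ (d + 3) = 0 := by
    have h1 : ((2 ^ (d + 3) : ℕ) : FuchsR2 (d + 2) f) = 0 := by
      have h0 : ((2 ^ (d + 2 + 1) : ℕ) : ZMod (2 ^ (d + 2 + 1))) = 0 := ZMod.natCast_self _
      calc ((2 ^ (d + 3) : ℕ) : FuchsR2 (d + 2) f)
          = algebraMap (ZMod (2 ^ (d + 2 + 1))) (FuchsR2 (d + 2) f)
              ((2 ^ (d + 2 + 1) : ℕ) : ZMod (2 ^ (d + 2 + 1))) := by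
            rw [map_natCast]
        _ = 0 := by rw [h0, map_zero]
    push_cast at h1
    exact h1
  have h4R : (4 : FuchsR2 (d + 2) f) ^ (d + 3) = 0 := by
    have h4eq : (4 : FuchsR2 (d + 2) f) = 2 ^ 2 := by norm_num
    rw [h4eq, ← pow_mul, show 2 * (d + 3) = (d + 3) + (d + 3) by ring, pow_add, h2R, zero_mul]
  have hmem4 : ∀ μ : FuchsR2 (d + 2) f,
      μ ∈ Ideal.span {(4 : FuchsR2 (d + 2) f)} ↔ ∃ x, μ = 4 * x := by
    intro μ
    rw [Ideal.mem_span_singleton']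
    constructor
    · rintro ⟨a, rfl⟩; exact ⟨a, (mul_comm a 4)⟩
    · rintro ⟨x, rfl⟩; exact ⟨x, mul_comm x 4⟩
  have part1 : ∀ μ ∈ Ideal.span {(4 : FuchsR2 (d + 2) f)}, ∀ l : ℕ,
      (1 + μ) ^ 2 ^ l = 1 ↔ (2 : FuchsR2 (d + 2) f) ^ l * μ = 0 := by
    intro μ hμ l
    obtain ⟨x, rfl⟩ := (hmem4 μ).mp hμ
    exact aux_part1 h2R x l
  refine ⟨part1, ?_⟩
  intro U hU
  obtain ⟨pb, hdim⟩ : ∃ pb : PowerBasis (ZMod (2 ^ (d + 2 + 1))) (FuchsR2 (d + 2) f),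
      pb.dim = lam := ⟨AdjoinRoot.powerBasis' hf, by rw [AdjoinRoot.powerBasis'_dim, hdeg]⟩
  have ψ : FuchsR2 (d + 2) f ≃+ (Fin lam → ZMod (2 ^ (d + 2 + 1))) :=
    (pb.basis.reindex (finCongr hdim)).equivFun.toAddEquiv
  have hψmul : ∀ (c : ℕ) (μ : FuchsR2 (d + 2) f) (i : Fin lam),
      ψ ((c : FuchsR2 (d + 2) f) * μ) i = (c : ZMod (2 ^ (d + 2 + 1))) * ψ μ i := by
    intro c μ i
    rw [← nsmul_eq_mul, map_nsmul]
    simp [nsmul_eq_mul]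
  have hψc : ∀ (c : ℕ) (μ : FuchsR2 (d + 2) f),
      ((c : FuchsR2 (d + 2) f) * μ = 0) ↔
        ∀ i, (c : ZMod (2 ^ (d + 2 + 1))) * ψ μ i = 0 := by
    intro c μ
    constructor
    · intro h i
      rw [← hψmul, h, map_zero, Pi.zero_apply]
    · intro h
      have h0 : ψ ((c : FuchsR2 (d + 2) f) * μ) = 0 := by
        funext i
        rw [Pi.zero_apply, hψmul]
        exact h i
      exact ψ.injective (h0.trans (map_zero ψ).symm)
  -- re-typed zshift lemmas (defeq : (d+1)+2 = (d+2)+1)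
  have zsval : ∀ z : ZMod (2 ^ (d + 1)), (zshift (d + 1) 2 z : ZMod (2 ^ (d + 2 + 1)))
      = 2 ^ 2 * ((z.val : ℕ) : ZMod (2 ^ (d + 2 + 1))) := fun z => zshift_val (d + 1) 2 z
  have zsinj : Function.Injective (zshift (d + 1) 2) := zshift_inj (d + 1) 2
  have zsrange : ∀ y : ZMod (2 ^ (d + 2 + 1)),
      (∃ z, zshift (d + 1) 2 z = y) ↔ ∃ w : ZMod (2 ^ (d + 2 + 1)), y = 2 ^ 2 * w :=
    fun y => zshift_range (d + 1) 2 y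
  have zstors : ∀ (c : ℕ) (z : ZMod (2 ^ (d + 1))),
      (c : ZMod (2 ^ (d + 2 + 1))) * zshift (d + 1) 2 z = 0 ↔
        (c : ZMod (2 ^ (d + 1))) * z = 0 :=
    fun c z => zshift_tors (d + 1) 2 c z
  have hmemco : ∀ μ : FuchsR2 (d + 2) f, μ ∈ Ideal.span {(4 : FuchsR2 (d + 2) f)} ↔
      ∀ i, ∃ z : ZMod (2 ^ (d + 1)), zshift (d + 1) 2 z = ψ μ i := by
    intro μ
    rw [hmem4 μ]
    constructor
    · rintro ⟨x, rfl⟩ i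
      refine (zsrange _).mpr ⟨ψ x i, ?_⟩
      have h1 := hψmul 4 x i
      have h2 : ((4 : ℕ) : FuchsR2 (d + 2) f) = 4 := by norm_num
      have h3 : ((4 : ℕ) : ZMod (2 ^ (d + 2 + 1))) = 2 ^ 2 := by norm_num
      rw [h2, h3] at h1
      exact h1
    · intro h
      choose z hz using h
      refine ⟨ψ.symm (fun i => ((z i).val : ZMod (2 ^ (d + 2 + 1)))), ?_⟩
      apply ψ.injective
      funext i
      have h1 := hψmul 4 (ψ.symm fun j => ((z j).val : ZMod (2 ^ (d + 2 + 1)))) i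
      have h2 : ((4 : ℕ) : FuchsR2 (d + 2) f) = 4 := by norm_num
      have h3 : ((4 : ℕ) : ZMod (2 ^ (d + 2 + 1))) = 2 ^ 2 := by norm_num
      rw [h2, h3] at h1
      rw [h1, ψ.apply_symm_apply, ← hz i, zsval]
  set Θ : (Fin lam → ZMod (2 ^ (d + 1))) → FuchsR2 (d + 2) f :=
    fun v => ψ.symm (fun i => zshift (d + 1) 2 (v i)) with hΘdef
  have hψΘ : ∀ v i, ψ (Θ v) i = zshift (d + 1) 2 (v i) := by
    intro v i
    rw [hΘdef, ψ.apply_symm_apply]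
  have Θmem : ∀ v, Θ v ∈ Ideal.span {(4 : FuchsR2 (d + 2) f)} :=
    fun v => (hmemco _).mpr fun i => ⟨v i, (hψΘ v i).symm⟩
  have Θinj : Function.Injective Θ := by
    intro v w h
    funext i
    exact zsinj (by rw [← hψΘ v i, ← hψΘ w i, h])
  have Θsurj : ∀ μ ∈ Ideal.span {(4 : FuchsR2 (d + 2) f)}, ∃ v, Θ v = μ := by
    intro μ hμ
    choose z hz using (hmemco μ).mp hμ
    exact ⟨z, ψ.injective (funext fun i => by rw [hψΘ]; exact hz i)⟩
  have hpowcast : ∀ l : ℕ,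
      ((2 : FuchsR2 (d + 2) f)) ^ l = ((2 ^ l : ℕ) : FuchsR2 (d + 2) f) := by
    intro l; push_cast; ring
  have Θtors : ∀ v (l : ℕ), ((2 : FuchsR2 (d + 2) f) ^ l * Θ v = 0) ↔
      ∀ i, (2 : ZMod (2 ^ (d + 1))) ^ l * v i = 0 := by
    intro v l
    rw [hpowcast l, hψc (2 ^ l)]
    refine forall_congr' fun i => ?_
    rw [hψΘ v i, zstors (2 ^ l) (v i)]
    have hc : ((2 ^ l : ℕ) : ZMod (2 ^ (d + 1))) = 2 ^ l := by push_cast; ring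
    rw [hc]
  have hnil : ∀ μ ∈ Ideal.span {(4 : FuchsR2 (d + 2) f)}, IsUnit (1 + μ) := by
    intro μ hμ
    obtain ⟨x, rfl⟩ := (hmem4 μ).mp hμ
    exact IsNilpotent.isUnit_one_add ⟨d + 3, by rw [mul_pow, h4R, zero_mul]⟩
  have hUpow : ∀ (u : U) (m : ℕ),
      u ^ m = 1 ↔ ((u : (FuchsR2 (d + 2) f)ˣ) : FuchsR2 (d + 2) f) ^ m = 1 := by
    intro u m
    simp [Subtype.ext_iff, Units.ext_iff]
  have mkUmem : ∀ v, (hnil _ (Θmem v)).unit ∈ U := by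
    intro v
    rw [hU, IsUnit.unit_spec]
    simpa using Θmem v
  have hcount : ∀ l : ℕ, Nat.card {u : U // u ^ 2 ^ l = 1}
      = Nat.card {z : ZMod (2 ^ (d + 1)) // (2 : ZMod (2 ^ (d + 1))) ^ l * z = 0} ^ lam := by
    intro l
    have key : {v : Fin lam → ZMod (2 ^ (d + 1)) // ∀ i, (2 : ZMod (2 ^ (d + 1))) ^ l * v i = 0}
        ≃ {u : U // u ^ 2 ^ l = 1} := by
      refine Equiv.ofBijective
        (fun vv => ⟨⟨(hnil _ (Θmem vv.1)).unit, mkUmem vv.1⟩, ?_⟩) ⟨?_, ?_⟩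
      · rw [hUpow]
        show ((hnil _ (Θmem vv.1)).unit : FuchsR2 (d + 2) f) ^ 2 ^ l = 1
        rw [IsUnit.unit_spec]
        exact (part1 _ (Θmem vv.1) l).mpr ((Θtors vv.1 l).mpr vv.2)
      · rintro ⟨v, hv⟩ ⟨w, hw⟩ h
        have h1 := congrArg (fun t : {u : U // u ^ 2 ^ l = 1} =>
          ((t.1 : (FuchsR2 (d + 2) f)ˣ) : FuchsR2 (d + 2) f)) h
        simp only at h1
        rw [IsUnit.unit_spec, IsUnit.unit_spec] at h1
        have h2 : Θ v = Θ w := by linear_combination h1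
        exact Subtype.ext (Θinj h2)
      · rintro ⟨⟨u, hu⟩, hupow⟩
        have hmu : ((u : FuchsR2 (d + 2) f)) - 1 ∈ Ideal.span {(4 : FuchsR2 (d + 2) f)} :=
          (hU u).mp hu
        obtain ⟨v, hv⟩ := Θsurj _ hmu
        have hcoe : ((u : FuchsR2 (d + 2) f)) = 1 + Θ v := by rw [hv]; ring
        have hvcond : ∀ i, (2 : ZMod (2 ^ (d + 1))) ^ l * v i = 0 := by
          refine (Θtors v l).mp ((part1 _ (Θmem v) l).mp ?_)
          have h3 := (hUpow ⟨u, hu⟩ (2 ^ l)).mp hupow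
          rw [show ((⟨u, hu⟩ : U) : (FuchsR2 (d + 2) f)ˣ) = u from rfl] at h3
          rw [hcoe] at h3
          exact h3
        refine ⟨⟨v, hvcond⟩, ?_⟩
        apply Subtype.ext
        apply Subtype.ext
        rw [Units.ext_iff]
        show ((hnil _ (Θmem v)).unit : FuchsR2 (d + 2) f) = u
        rw [IsUnit.unit_spec]
        exact hcoe.symm
    calc Nat.card {u : U // u ^ 2 ^ l = 1}
        = Nat.card {v : Fin lam → ZMod (2 ^ (d + 1)) //
            ∀ i, (2 : ZMod (2 ^ (d + 1))) ^ l * v i = 0} := (Nat.card_congr key).symm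
      _ = Nat.card (∀ _i : Fin lam,
            {z : ZMod (2 ^ (d + 1)) // (2 : ZMod (2 ^ (d + 1))) ^ l * z = 0}) :=
          Nat.card_congr (Equiv.subtypePiEquivPi
            (p := fun _ z => (2 : ZMod (2 ^ (d + 1))) ^ l * z = 0))
      _ = _ := by rw [Nat.card_pi, Finset.prod_const, Finset.card_univ, Fintype.card_fin]
  have hP1 : ∀ u : U, u ^ 2 ^ (d + 1) = 1 := by
    intro u
    rw [hUpow]
    have hmu := (hU u).mp u.2
    have hrw : ((u : (FuchsR2 (d + 2) f)ˣ) : FuchsR2 (d + 2) f)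
        = 1 + (((u : (FuchsR2 (d + 2) f)ˣ) : FuchsR2 (d + 2) f) - 1) := by ring
    rw [hrw]
    refine (part1 _ hmu (d + 1)).mpr ?_
    obtain ⟨x, hx⟩ := (hmem4 _).mp hmu
    rw [hx, ← mul_assoc]
    have h24 : (2 : FuchsR2 (d + 2) f) ^ (d + 1) * 4 = 0 := by
      have he : (2 : FuchsR2 (d + 2) f) ^ (d + 1) * 4 = 2 ^ (d + 3) := by ring
      rw [he, h2R]
    rw [h24, zero_mul]
  have hcardzfull : Nat.card {z : ZMod (2 ^ (d + 1)) //
      (2 : ZMod (2 ^ (d + 1))) ^ (d + 1) * z = 0} = 2 ^ (d + 1) := by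
    rw [Nat.card_congr (Equiv.subtypeUnivEquiv (fun z => by rw [two_pow_zero, zero_mul]))]
    exact Nat.card_zmod _
  have hcardz1 : Nat.card {z : ZMod (2 ^ (d + 1)) //
      (2 : ZMod (2 ^ (d + 1))) ^ 1 * z = 0} = 2 := by
    simpa using tors_card (d + 1) 1 (by omega)
  have hcardU : Nat.card U = 2 ^ ((d + 1) * lam) := by
    calc Nat.card U = Nat.card {u : U // u ^ 2 ^ (d + 1) = 1} :=
          (Nat.card_congr (Equiv.subtypeUnivEquiv fun u => hP1 u)).symm
      _ = (2 ^ (d + 1)) ^ lam := by rw [hcount (d + 1), hcardzfull]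
      _ = 2 ^ ((d + 1) * lam) := by rw [← pow_mul]
  have hcard2 : Nat.card {u : U // u ^ 2 ^ 1 = 1} = 2 ^ lam := by
    rw [hcount 1, hcardz1]
  have hfinR : Finite (FuchsR2 (d + 2) f) := Finite.of_equiv _ ψ.toEquiv.symm
  have hfinRu : Finite (FuchsR2 (d + 2) f)ˣ := inferInstance
  have hfinU : Finite U := inferInstance
  classical
  obtain ⟨ι, hι, n, hn1, ⟨eqU⟩⟩ := CommGroup.equiv_prod_multiplicative_zmod_of_finite U
  haveI := hι
  have hdvd : ∀ i, n i ∣ 2 ^ (d + 1) := by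
    intro i
    have hx := hP1 (eqU.symm (Pi.mulSingle i (Multiplicative.ofAdd (1 : ZMod (n i)))))
    have hx2 := congrArg eqU hx
    rw [map_pow, MulEquiv.apply_symm_apply, map_one eqU] at hx2
    have hx3 := congrFun hx2 i
    rw [Pi.pow_apply, Pi.mulSingle_eq_same, Pi.one_apply] at hx3
    have hx4 := congrArg Multiplicative.toAdd hx3
    rw [toAdd_pow, toAdd_ofAdd, toAdd_one, nsmul_eq_mul, mul_one] at hx4
    exact (ZMod.natCast_eq_zero_iff _ _).mp hx4
  have hE : ∀ i, ∃ c, c ≤ d + 1 ∧ n i = 2 ^ c ∧ 1 ≤ c := by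
    intro i
    obtain ⟨c, hc1, hc2⟩ := (Nat.dvd_prime_pow Nat.prime_two).mp (hdvd i)
    refine ⟨c, hc1, hc2, ?_⟩
    by_contra hc
    have hc0 : c = 0 := by omega
    subst hc0
    have := hn1 i
    rw [hc2, pow_zero] at this
    omega
  choose E hE1 hE2 hE3 using hE
  have hmod : Nat.card {u : U // u ^ 2 ^ 1 = 1}
      = ∏ i, Nat.card {z : ZMod (n i) // (2 : ZMod (n i)) ^ 1 * z = 0} := by
    have e1 : {u : U // u ^ 2 ^ 1 = 1}
        ≃ {w : (i : ι) → Multiplicative (ZMod (n i)) // w ^ 2 ^ 1 = 1} :=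
      eqU.toEquiv.subtypeEquiv (fun u => by
        show u ^ 2 ^ 1 = 1 ↔ eqU u ^ 2 ^ 1 = 1
        rw [← map_pow]
        exact ⟨fun h => by rw [h, map_one eqU],
          fun h => eqU.injective (by rw [h, map_one eqU])⟩)
    have e2 : {w : (i : ι) → Multiplicative (ZMod (n i)) // w ^ 2 ^ 1 = 1}
        ≃ ∀ i, {y : Multiplicative (ZMod (n i)) // y ^ 2 ^ 1 = 1} := by
      refine (Equiv.subtypeEquiv (Equiv.refl _) (fun w => ?_)).trans
        (Equiv.subtypePiEquivPi (p := fun (i : ι) (y : Multiplicative (ZMod (n i))) =>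
          y ^ 2 ^ 1 = 1))
      simp [funext_iff]
    have e3 : ∀ i : ι, {y : Multiplicative (ZMod (n i)) // y ^ 2 ^ 1 = 1}
        ≃ {z : ZMod (n i) // (2 : ZMod (n i)) ^ 1 * z = 0} := by
      intro i
      refine Multiplicative.toAdd.subtypeEquiv (fun y => ?_)
      have hcast : ((2 ^ 1 : ℕ) : ZMod (n i)) = (2 : ZMod (n i)) ^ 1 := by push_cast; ring
      constructor
      · intro h
        have h2 := congrArg Multiplicative.toAdd h
        rw [toAdd_pow, toAdd_one, nsmul_eq_mul, hcast] at h2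
        exact h2
      · intro h
        apply Multiplicative.toAdd.injective
        rw [toAdd_pow, toAdd_one, nsmul_eq_mul, hcast]
        exact h
    calc Nat.card {u : U // u ^ 2 ^ 1 = 1}
        = Nat.card (∀ i, {z : ZMod (n i) // (2 : ZMod (n i)) ^ 1 * z = 0}) :=
          Nat.card_congr (e1.trans (e2.trans (Equiv.piCongrRight e3)))
      _ = ∏ i, Nat.card {z : ZMod (n i) // (2 : ZMod (n i)) ^ 1 * z = 0} := Nat.card_pi
  have hfac : ∀ i, Nat.card {z : ZMod (n i) // (2 : ZMod (n i)) ^ 1 * z = 0} = 2 := by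
    intro i
    rw [hE2 i]
    simpa using tors_card (E i) 1 (hE3 i)
  have hlamι : Fintype.card ι = lam := by
    have h1 : (2 : ℕ) ^ Fintype.card ι = 2 ^ lam := by
      rw [← hcard2, hmod, Finset.prod_congr rfl (fun i _ => hfac i),
        Finset.prod_const, Finset.card_univ]
    exact Nat.pow_right_injective (le_refl 2) h1
  have hcardmodel : Nat.card U = 2 ^ (∑ i, E i) := by
    calc Nat.card U = Nat.card (∀ i, Multiplicative (ZMod (n i))) := Nat.card_congr eqU.toEquiv
      _ = ∏ i, Nat.card (Multiplicative (ZMod (n i))) := Nat.card_pi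
      _ = ∏ i, 2 ^ E i := by
          refine Finset.prod_congr rfl fun i _ => ?_
          rw [Nat.card_congr (Multiplicative.toAdd (α := ZMod (n i))), Nat.card_zmod, hE2 i]
      _ = 2 ^ (∑ i, E i) := Finset.prod_pow_eq_pow_sum _ _ _
  have hsum : ∑ i, E i = (d + 1) * lam :=
    Nat.pow_right_injective (le_refl 2) (hcardmodel.symm.trans hcardU)
  have hEall : ∀ i, E i = d + 1 := by
    have hle : ∀ i ∈ Finset.univ, E i ≤ d + 1 := fun i _ => hE1 i
    have hs2 : ∑ i : ι, E i = ∑ _i : ι, (d + 1) := by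
      rw [hsum, Finset.sum_const, Finset.card_univ, hlamι, smul_eq_mul, mul_comm]
    intro i
    exact (Finset.sum_eq_sum_iff_of_le hle).mp hs2 i (Finset.mem_univ i)
  refine ⟨?_⟩
  have e5 : (∀ i, Multiplicative (ZMod (n i)))
      ≃* (∀ _i : ι, Multiplicative (ZMod (2 ^ (d + 1)))) :=
    MulEquiv.piCongrRight fun i =>
      AddEquiv.toMultiplicative (ZMod.ringEquivCongr (by rw [hE2 i, hEall i])).toAddEquiv
  have eι : ι ≃ Fin lam := Fintype.equivFinOfCardEq hlamι
  have e7 : (∀ _i : ι, ZMod (2 ^ (d + 1))) ≃+ (Fin lam → ZMod (2 ^ (d + 1))) :=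
    (RingEquiv.piCongrLeft (fun _ : Fin lam => ZMod (2 ^ (d + 1))) eι).toAddEquiv
  exact eqU.trans (e5.trans ((MulEquiv.piMultiplicative
    (fun _i : ι => ZMod (2 ^ (d + 1)))).symm.trans (AddEquiv.toMultiplicative e7)))
end
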